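/- Let X be a Banach space, C, D ∈ L(X) bounded linear operators such that I − C is invertible and both D² and DC are compact. Then I − C − D is a Fredholm operator of index zero. -/

import Mathlib

/-- A bounded operator `F` on a Banach space is Fredholm of index zero:
finite-dimensional kernel, closed range, finite-dimensional cokernel, and
the dimensions of kernel and cokernel agree. -/
def FredholmIndexZero {X : Type*} [NormedAddCommGroup X] [NormedSpace ℝ X]
    (F : X →L[ℝ] X) : Prop :=
  FiniteDimensional ℝ (LinearMap.ker (F : X →ₗ[ℝ] X)) ∧
  IsClosed (LinearMap.range (F : X →ₗ[ℝ] X) : Set X) ∧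
  FiniteDimensional ℝ (X ⧸ LinearMap.range (F : X →ₗ[ℝ] X)) ∧
  Module.finrank ℝ (LinearMap.ker (F : X →ₗ[ℝ] X)) = Module.finrank ℝ (X ⧸ LinearMap.range (F : X →ₗ[ℝ] X))

/-
Put `T = (1 - C)⁻¹ D`. Then `1 - C - D = (1 - C) (1 - T)`, and since `(1 - C)⁻¹ = 1 + C (1 - C)⁻¹`,
`T² = (1 - C)⁻¹ (D² + D C (1 - C)⁻¹ D)` is compact. So it suffices to treat `A = 1 - T`, which has
the commuting regularizer `B = 1 + T`: `1 - B A = T²` is compact.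

For such `A` we run Riesz theory. Every power `Aⁿ` again has a compact-remainder regularizer, so
it has finite-dimensional kernel and closed range. Riesz's lemma and compactness of `1 - B A`
force the increasing chain `ker Aⁿ` and the decreasing chain `range Aⁿ` to become stationary,
whence `X = ker Aᵖ ⊕ range Aᵖ`. Both summands are `A`-invariant and `A` is bijective on the
second, so kernel and cokernel of `A` are those of `A` on the finite-dimensional `ker Aᵖ`, where
rank–nullity makes their dimensions agree.
-/

open Module

namespace LinearMap

section Ring

variable {R M : Type*} [Ring R] [AddCommGroup M] [Module R M] {f g : M →ₗ[R] M}

theorem mapsTo_ker_of_commute (h : Commute f g) : Set.MapsTo g (ker f) (ker f) := fun x hx ↦ by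
  rw [SetLike.mem_coe, mem_ker] at hx ⊢
  rw [← Module.End.mul_apply, h.eq, Module.End.mul_apply, hx, map_zero]

theorem mapsTo_range_of_commute (h : Commute f g) : Set.MapsTo g (range f) (range f) := by
  rintro - ⟨x, rfl⟩
  exact ⟨g x, by rw [← Module.End.mul_apply, h.eq, Module.End.mul_apply]⟩

theorem map_range_pow (f : M →ₗ[R] M) (n : ℕ) : (range (f ^ n)).map f = range (f ^ (n + 1)) := by
  rw [pow_succ', Module.End.mul_eq_comp, range_comp]

theorem range_pow_eq_of_range_pow_le_succ {n : ℕ} (h : range (f ^ n) ≤ range (f ^ (n + 1)))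
    {m : ℕ} (hm : n ≤ m) : range (f ^ m) = range (f ^ n) := by
  obtain ⟨j, rfl⟩ := Nat.exists_eq_add_of_le hm
  induction j with
  | zero => rfl
  | succ j ih =>
    rw [← add_assoc, ← map_range_pow, ih (by omega), map_range_pow]
    exact le_antisymm (f.iterateRange.monotone n.le_succ) h

theorem isCompl_ker_pow_range_pow {n : ℕ} (hker : ker (f ^ (n + n)) ≤ ker (f ^ n))
    (hrange : range (f ^ n) ≤ range (f ^ (n + n))) :
    IsCompl (ker (f ^ n)) (range (f ^ n)) := by
  refine ⟨disjoint_iff_inf_le.2 ?_, codisjoint_iff_le_sup.2 fun x _ ↦ ?_⟩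
  · rintro - ⟨hx, ⟨y, rfl⟩⟩
    have hy : y ∈ ker (f ^ (n + n)) := by rwa [mem_ker, pow_add, Module.End.mul_apply]
    exact hker hy
  · obtain ⟨y, hy⟩ := hrange (mem_range_self (f ^ n) x)
    refine Submodule.mem_sup.2
      ⟨x - (f ^ n) y, ?_, (f ^ n) y, mem_range_self _ y, sub_add_cancel _ _⟩
    rw [mem_ker, map_sub, ← Module.End.mul_apply, ← pow_add, hy, sub_self]

end Ring

theorem ker_pow_eq_of_ker_pow_succ_le {K V : Type*} [DivisionRing K] [AddCommGroup V] [Module K V]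
    {f : V →ₗ[K] V} {n : ℕ} (h : ker (f ^ (n + 1)) ≤ ker (f ^ n)) {m : ℕ} (hm : n ≤ m) :
    ker (f ^ m) = ker (f ^ n) := by
  obtain ⟨j, rfl⟩ := Nat.exists_eq_add_of_le hm
  exact (Module.End.ker_pow_constant (le_antisymm (f.iterateKer.monotone n.le_succ) h) j).symm

section Field

variable {K V : Type*} [Field K] [AddCommGroup V] [Module K V] {f : V →ₗ[K] V}
  {N R : Submodule K V}

theorem comap_range_eq_range_restrict (hNR : IsCompl N R) (hN : Set.MapsTo f N N)
    (hR : R.map f = R) : (range f).comap N.subtype = range (f.restrict hN) := by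
  refine le_antisymm (fun x hx ↦ ?_) ?_
  · obtain ⟨y, hy⟩ := Submodule.mem_comap.1 hx
    obtain ⟨n, hn, r, hr, rfl⟩ := Submodule.mem_sup.1 (hNR.sup_eq_top ▸ Submodule.mem_top (x := y))
    have hfr : f r ∈ R := hR ▸ Submodule.mem_map_of_mem hr
    have : (x : V) - f n = f r := by rw [← N.subtype_apply, ← hy, map_add]; abel
    have h0 : (x : V) - f n = 0 :=
      (Submodule.disjoint_def.1 hNR.disjoint) _ (N.sub_mem x.2 (hN hn)) (this ▸ hfr)
    exact ⟨⟨n, hn⟩, Subtype.ext (sub_eq_zero.1 h0).symm⟩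
  · rintro - ⟨x, rfl⟩
    exact ⟨x, rfl⟩

theorem finrank_ker_eq_finrank_quotient_range (hNR : IsCompl N R) (hN : Set.MapsTo f N N)
    (hR : R.map f = R) (hker : ker f ≤ N) [FiniteDimensional K N] :
    FiniteDimensional K (V ⧸ range f) ∧ finrank K (ker f) = finrank K (V ⧸ range f) := by
  set g := f.restrict hN
  have hsurj : Function.Surjective ((range f).mkQ ∘ₗ N.subtype) := by
    intro y
    obtain ⟨x, rfl⟩ := (range f).mkQ_surjective y
    obtain ⟨n, hn, r, hr, rfl⟩ := Submodule.mem_sup.1 (hNR.sup_eq_top ▸ Submodule.mem_top (x := x))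
    have hrf : r ∈ range f := by
      rw [← hR] at hr
      obtain ⟨s, -, rfl⟩ := hr
      exact mem_range_self f s
    refine ⟨⟨n, hn⟩, ?_⟩
    simp [(Submodule.Quotient.mk_eq_zero _).2 hrf]
  have hkerq : ker ((range f).mkQ ∘ₗ N.subtype) = range g := by
    rw [ker_comp, Submodule.ker_mkQ, comap_range_eq_range_restrict hNR hN hR]
  let e : (N ⧸ range g) ≃ₗ[K] V ⧸ range f :=
    (Submodule.quotEquivOfEq _ _ hkerq.symm).trans (quotKerEquivOfSurjective _ hsurj)
  have hkerg : finrank K (ker g) = finrank K (ker f) := by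
    rw [show ker g = (ker f).comap N.subtype from ker_restrict hN,
      (Submodule.comapSubtypeEquivOfLe hker).finrank_eq]
  refine ⟨Module.Finite.equiv e, ?_⟩
  rw [← e.finrank_eq, ← hkerg]
  have := finrank_range_add_finrank_ker g
  have := Submodule.finrank_quotient_add_finrank (range g)
  omega

end Field

end LinearMap

section Riesz

open LinearMap Filter Topology

variable {𝕜 X : Type*} [RCLike 𝕜] [NormedAddCommGroup X] [NormedSpace 𝕜 X]

theorem riesz_lemma_of_lt {Z Y : Submodule 𝕜 X} (hZ : IsClosed (Z : Set X)) (hZY : Z < Y)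
    {r : ℝ} (hr : r < 1) : ∃ x ∈ Y, ‖x‖ = 1 ∧ ∀ z ∈ Z, r ≤ ‖x - z‖ := by
  obtain ⟨y, hyY, hyZ⟩ := SetLike.exists_of_lt hZY
  obtain ⟨x, -, hx1, hxZ⟩ := riesz_lemma_of_lt_one (F := Z.comap Y.subtype)
    (hZ.preimage continuous_subtype_val) ⟨⟨y, hyY⟩, hyZ⟩ hr
  exact ⟨x, x.2, hx1, fun z hz ↦ hxZ ⟨z, hZY.le hz⟩ hz⟩

namespace IsCompactOperator

variable {L : X →L[𝕜] X}

theorem exists_norm_sub_apply_lt (hL : IsCompactOperator L) {x : ℕ → X} {r : ℝ}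
    (hx : ∀ n, ‖x n‖ ≤ r) {ε : ℝ} (hε : 0 < ε) : ∃ m n, m < n ∧ ‖L (x n) - L (x m)‖ < ε := by
  obtain ⟨K, hK, hKsub⟩ := hL.image_closedBall_subset_compact r
  obtain ⟨a, -, φ, hφ, hconv⟩ := hK.tendsto_subseq fun n ↦ hKsub ⟨x n, by simpa using hx n, rfl⟩
  obtain ⟨N, hN⟩ := Metric.cauchySeq_iff'.1 hconv.cauchySeq ε hε
  exact ⟨φ N, φ (N + 1), hφ N.lt_succ_self, by simpa [dist_eq_norm] using hN (N + 1) N.le_succ⟩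

theorem exists_tendsto_subseq_of_tendsto_sub (hL : IsCompactOperator L) {u : ℕ → X} {r : ℝ}
    (hu : ∀ n, ‖u n‖ ≤ r) (h : Tendsto (fun n ↦ u n - L (u n)) atTop (𝓝 0)) :
    ∃ a, ∃ φ : ℕ → ℕ, StrictMono φ ∧ Tendsto (u ∘ φ) atTop (𝓝 a) := by
  obtain ⟨K, hK, hKsub⟩ := hL.image_closedBall_subset_compact r
  obtain ⟨a, -, φ, hφ, hconv⟩ := hK.tendsto_subseq fun n ↦ hKsub ⟨u n, by simpa using hu n, rfl⟩
  exact ⟨a, φ, hφ, by simpa [Function.comp_def] using (h.comp hφ.tendsto_atTop).add hconv⟩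

theorem exists_succ_le_of_monotone (hL : IsCompactOperator L) {F : ℕ → Submodule 𝕜 X}
    (hF : Monotone F) (hclosed : ∀ n, IsClosed (F n : Set X))
    (hmaps : ∀ n, Set.MapsTo L (F n) (F n)) (hstep : ∀ n, ∀ x ∈ F (n + 1), x - L x ∈ F n) :
    ∃ n, F (n + 1) ≤ F n := by
  by_contra! h
  -- Riesz's lemma gives unit vectors `x n ∈ F (n + 1)` at distance `≥ 1/2` from `F n`; the
  -- shape of `hstep` makes their images under `L` pairwise `1/2`-separated.
  choose x hxF hx1 hxsep using fun n ↦
    riesz_lemma_of_lt (hclosed n) ((hF n.le_succ).lt_of_not_ge (h n)) (r := 1 / 2) (by norm_num)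
  obtain ⟨m, n, hmn, hlt⟩ :=
    hL.exists_norm_sub_apply_lt (fun n ↦ (hx1 n).le) (by norm_num : (0 : ℝ) < 1 / 2)
  have hz : x n - L (x n) + L (x m) ∈ F n := add_mem (hstep n _ (hxF n)) (hF hmn (hmaps _ (hxF m)))
  refine hlt.not_ge ?_
  calc 1 / 2 ≤ ‖x n - (x n - L (x n) + L (x m))‖ := hxsep n _ hz
    _ = ‖L (x n) - L (x m)‖ := by congr 1; abel

theorem exists_le_succ_of_antitone (hL : IsCompactOperator L) {F : ℕ → Submodule 𝕜 X}
    (hF : Antitone F) (hclosed : ∀ n, IsClosed (F n : Set X))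
    (hmaps : ∀ n, Set.MapsTo L (F n) (F n)) (hstep : ∀ n, ∀ x ∈ F n, x - L x ∈ F (n + 1)) :
    ∃ n, F n ≤ F (n + 1) := by
  by_contra! h
  choose x hxF hx1 hxsep using fun n ↦
    riesz_lemma_of_lt (hclosed (n + 1)) ((hF n.le_succ).lt_of_not_ge (h n)) (r := 1 / 2)
      (by norm_num)
  obtain ⟨m, n, hmn, hlt⟩ :=
    hL.exists_norm_sub_apply_lt (fun n ↦ (hx1 n).le) (by norm_num : (0 : ℝ) < 1 / 2)
  have hz : x m - L (x m) + L (x n) ∈ F (m + 1) :=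
    add_mem (hstep m _ (hxF m)) (hF hmn (hmaps n (hxF n)))
  refine hlt.not_ge ?_
  calc 1 / 2 ≤ ‖x m - (x m - L (x m) + L (x n))‖ := hxsep m _ hz
    _ = ‖L (x n) - L (x m)‖ := by rw [norm_sub_rev]; congr 1; abel

theorem finiteDimensional_of_forall_apply_eq (hL : IsCompactOperator L) {V : Submodule 𝕜 X}
    (hV : IsClosed (V : Set X)) (hfix : ∀ x ∈ V, L x = x) : FiniteDimensional 𝕜 V := by
  have hmaps : ∀ x ∈ V, (L : X →ₗ[𝕜] X) x ∈ V := fun x hx ↦ (hfix x hx).symm ▸ hx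
  have hid : ((L : X →ₗ[𝕜] X).restrict hmaps : V → V) = id :=
    funext fun x ↦ Subtype.ext (hfix x x.2)
  exact FiniteDimensional.of_isCompactOperator_id (hid ▸ hL.restrict hmaps hV)

end IsCompactOperator

theorem isCompactOperator_one_sub_pow {T : X →L[𝕜] X} (h : IsCompactOperator ⇑(1 - T)) (n : ℕ) :
    IsCompactOperator ⇑(1 - T ^ n) := by
  rw [← mul_neg_geom_sum]
  exact h.comp_clm _

namespace ContinuousLinearMap

variable {A B : X →L[𝕜] X}

theorem finiteDimensional_ker_of_isCompactOperator_one_sub_mul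
    (h : IsCompactOperator ⇑(1 - B * A)) : FiniteDimensional 𝕜 (ker (A : X →ₗ[𝕜] X)) :=
  h.finiteDimensional_of_forall_apply_eq A.isClosed_ker fun x (hx : A x = 0) ↦ by simp [hx]

theorem exists_norm_le_mul_norm_apply_of_disjoint_ker (h : IsCompactOperator ⇑(1 - B * A))
    {q : Submodule 𝕜 X} (hq : IsClosed (q : Set X)) (hdisj : Disjoint q (ker (A : X →ₗ[𝕜] X))) :
    ∃ c, ∀ x ∈ q, ‖x‖ ≤ c * ‖A x‖ := by
  by_contra! hc
  have hseq (n : ℕ) : ∃ u ∈ q, ‖u‖ = 1 ∧ ‖A u‖ < 1 / (n + 1) := by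
    obtain ⟨x, hxq, hx⟩ := hc (n + 1)
    have hx0 : x ≠ 0 := by rintro rfl; simp at hx
    refine ⟨(‖x‖⁻¹ : 𝕜) • x, q.smul_mem _ hxq, norm_smul_inv_norm hx0, ?_⟩
    rw [map_smul, norm_smul, norm_inv, RCLike.norm_ofReal, abs_norm,
      inv_mul_lt_iff₀ (by positivity), mul_one_div, lt_div_iff₀ (by positivity)]
    linarith
  choose u huq hu1 hAu using hseq
  have hAu0 : Tendsto (fun n ↦ A (u n)) atTop (𝓝 0) :=
    squeeze_zero_norm (fun n ↦ (hAu n).le) tendsto_one_div_add_atTop_nhds_zero_nat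
  have hsub : Tendsto (fun n ↦ u n - (1 - B * A) (u n)) atTop (𝓝 0) := by
    simpa [Function.comp_def] using (B.continuous.tendsto 0).comp hAu0
  obtain ⟨a, φ, hφ, hua⟩ := h.exists_tendsto_subseq_of_tendsto_sub (fun n ↦ (hu1 n).le) hsub
  have haq : a ∈ q := hq.mem_of_tendsto hua (Eventually.of_forall fun n ↦ huq (φ n))
  have ha1 : ‖a‖ = 1 := tendsto_nhds_unique hua.norm (by simp [hu1])
  have hAa : A a = 0 :=
    tendsto_nhds_unique ((A.continuous.tendsto a).comp hua) (hAu0.comp hφ.tendsto_atTop)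
  simp [Submodule.disjoint_def.1 hdisj a haq hAa] at ha1

theorem isClosed_range_of_isCompactOperator_one_sub_mul [CompleteSpace X]
    (h : IsCompactOperator ⇑(1 - B * A)) : IsClosed (range (A : X →ₗ[𝕜] X) : Set X) := by
  have := finiteDimensional_ker_of_isCompactOperator_one_sub_mul h
  obtain ⟨q, hq, hcompl⟩ := (Submodule.ClosedComplemented.of_finiteDimensional
    (ker (A : X →ₗ[𝕜] X))).exists_isClosed_isCompl
  obtain ⟨c, hc⟩ := exists_norm_le_mul_norm_apply_of_disjoint_ker h hq hcompl.symm.disjoint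
  have : CompleteSpace q := hq.completeSpace_coe
  have hanti : AntilipschitzWith c.toNNReal (A ∘L q.subtypeL) :=
    AddMonoidHomClass.antilipschitz_of_bound _ fun x ↦
      (hc x x.2).trans (mul_le_mul_of_nonneg_right (Real.le_coe_toNNReal c) (norm_nonneg _))
  have hrange : Set.range (A ∘L q.subtypeL) = range (A : X →ₗ[𝕜] X) := by
    rw [← Submodule.map_eq_range_iff.2 hcompl.symm.codisjoint, Submodule.map_coe]
    ext
    simp
  rw [← hrange]
  exact hanti.isClosed_range (A ∘L q.subtypeL).uniformContinuous

theorem isCompactOperator_one_sub_pow_mul_pow (hAB : Commute A B)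
    (h : IsCompactOperator ⇑(1 - B * A)) (n : ℕ) : IsCompactOperator ⇑(1 - B ^ n * A ^ n) := by
  rw [← hAB.symm.mul_pow]
  exact isCompactOperator_one_sub_pow h n

theorem exists_ker_pow_succ_le (hAB : Commute A B) (h : IsCompactOperator ⇑(1 - B * A)) :
    ∃ n, LinearMap.ker ((A : X →ₗ[𝕜] X) ^ (n + 1)) ≤ LinearMap.ker ((A : X →ₗ[𝕜] X) ^ n) := by
  have hABl := hAB.map toLinearMapRingHom
  have hAL := ((Commute.one_right A).sub_right (hAB.mul_right (Commute.refl A))).map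
    toLinearMapRingHom
  refine h.exists_succ_le_of_monotone (A : X →ₗ[𝕜] X).iterateKer.monotone
    (fun n ↦ by
      change IsClosed (LinearMap.ker ((A : X →ₗ[𝕜] X) ^ n) : Set X)
      rw [← toLinearMap_pow]; exact (A ^ n).isClosed_ker)
    (fun n ↦ mapsTo_ker_of_commute (hAL.pow_left n)) fun n x hx ↦ ?_
  have hAx : A x ∈ LinearMap.ker ((A : X →ₗ[𝕜] X) ^ n) := by
    change ((A : X →ₗ[𝕜] X) ^ n * (A : X →ₗ[𝕜] X)) x = 0
    rwa [← pow_succ]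
  simpa using mapsTo_ker_of_commute (hABl.pow_left n) hAx

theorem exists_range_pow_le_succ [CompleteSpace X] (hAB : Commute A B)
    (h : IsCompactOperator ⇑(1 - B * A)) :
    ∃ n, range ((A : X →ₗ[𝕜] X) ^ n) ≤ range ((A : X →ₗ[𝕜] X) ^ (n + 1)) := by
  have hABl := hAB.map toLinearMapRingHom
  have hAL := ((Commute.one_right A).sub_right (hAB.mul_right (Commute.refl A))).map
    toLinearMapRingHom
  refine h.exists_le_succ_of_antitone (A : X →ₗ[𝕜] X).iterateRange.monotone
    (fun n ↦ ?_) (fun n ↦ mapsTo_range_of_commute (hAL.pow_left n)) fun n x hx ↦ ?_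
  · rw [← toLinearMap_pow]
    exact isClosed_range_of_isCompactOperator_one_sub_mul
      (isCompactOperator_one_sub_pow_mul_pow hAB h n)
  · have hAx : A x ∈ range ((A : X →ₗ[𝕜] X) ^ (n + 1)) := by
      rw [← map_range_pow]; exact Submodule.mem_map_of_mem hx
    simpa using mapsTo_range_of_commute (hABl.pow_left (n + 1)) hAx

end ContinuousLinearMap

end Riesz

section Fredholm

open LinearMap ContinuousLinearMap

variable {X : Type*} [NormedAddCommGroup X] [NormedSpace ℝ X]

theorem FredholmIndexZero.isUnit_mul {U F : X →L[ℝ] X} (hU : IsUnit U)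
    (h : FredholmIndexZero F) : FredholmIndexZero (U * F) := by
  obtain ⟨u, rfl⟩ := hU
  let e := ContinuousLinearEquiv.ofUnit u
  have hker : ker ((↑u * F : X →L[ℝ] X) : X →ₗ[ℝ] X) = ker (F : X →ₗ[ℝ] X) :=
    ker_comp_of_ker_eq_bot _ (ker_eq_bot_of_injective e.injective)
  have hrange : range ((↑u * F : X →L[ℝ] X) : X →ₗ[ℝ] X) =
      (range (F : X →ₗ[ℝ] X)).map (e : X →ₗ[ℝ] X) :=
    range_comp _ _
  obtain ⟨hfin, hclosed, hcofin, hindex⟩ := h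
  let q := Submodule.Quotient.equiv _ _ e.toLinearEquiv hrange.symm
  refine ⟨hker ▸ hfin, ?_, Module.Finite.equiv q, ?_⟩
  · rw [hrange, Submodule.map_coe]
    exact e.toHomeomorph.isClosedMap _ hclosed
  · rw [hker, hindex, q.finrank_eq]

variable [CompleteSpace X]

theorem fredholmIndexZero_of_commute_of_isCompactOperator {A B : X →L[ℝ] X} (hAB : Commute A B)
    (h : IsCompactOperator ⇑(1 - B * A)) : FredholmIndexZero A := by
  set f : X →ₗ[ℝ] X := (A : X →ₗ[ℝ] X)
  obtain ⟨k₁, hk₁⟩ := exists_ker_pow_succ_le hAB h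
  obtain ⟨k₂, hk₂⟩ := exists_range_pow_le_succ hAB h
  set p := k₁ + k₂ + 1
  have hker {m} (hm : p ≤ m) : ker (f ^ m) = ker (f ^ p) :=
    (ker_pow_eq_of_ker_pow_succ_le hk₁ (by omega)).trans
      (ker_pow_eq_of_ker_pow_succ_le hk₁ (by omega)).symm
  have hrange {m} (hm : p ≤ m) : range (f ^ m) = range (f ^ p) :=
    (range_pow_eq_of_range_pow_le_succ hk₂ (by omega)).trans
      (range_pow_eq_of_range_pow_le_succ hk₂ (by omega)).symm
  have : FiniteDimensional ℝ (ker (f ^ p)) := by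
    rw [← toLinearMap_pow]
    exact finiteDimensional_ker_of_isCompactOperator_one_sub_mul
      (isCompactOperator_one_sub_pow_mul_pow hAB h p)
  have hcompl : IsCompl (ker (f ^ p)) (range (f ^ p)) :=
    isCompl_ker_pow_range_pow (hker (by omega)).le (hrange (by omega)).ge
  have hmapsTo : Set.MapsTo f (ker (f ^ p)) (ker (f ^ p)) :=
    mapsTo_ker_of_commute (Commute.pow_self f p)
  have hmap : (range (f ^ p)).map f = range (f ^ p) := by rw [map_range_pow, hrange (by omega)]
  have hker_le : ker f ≤ ker (f ^ p) := by simpa using f.iterateKer.monotone (by omega : 1 ≤ p)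
  obtain ⟨hcofin, hindex⟩ :=
    finrank_ker_eq_finrank_quotient_range hcompl hmapsTo hmap hker_le
  exact ⟨finiteDimensional_ker_of_isCompactOperator_one_sub_mul h,
    isClosed_range_of_isCompactOperator_one_sub_mul h, hcofin, hindex⟩

theorem fredholmIndexZero_one_sub_of_isCompactOperator_mul_self {K : X →L[ℝ] X}
    (hK : IsCompactOperator ⇑(K * K)) : FredholmIndexZero (1 - K) := by
  refine fredholmIndexZero_of_commute_of_isCompactOperator (B := 1 + K)
    ((Commute.one_left _).sub_left ((Commute.one_right K).add_right (Commute.refl K))) ?_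
  rwa [show 1 - (1 + K) * (1 - K) = K * K by noncomm_ring]

end Fredholm

theorem stmt_2 {X : Type*} [NormedAddCommGroup X] [NormedSpace ℝ X] [CompleteSpace X]
    (C D : X →L[ℝ] X) (hC : IsUnit (1 - C))
    (hD2 : IsCompactOperator (⇑(D * D))) (hDC : IsCompactOperator (⇑(D * C))) :
    FredholmIndexZero (1 - C - D) := by
  obtain ⟨V, hV⟩ := hC.exists_right_inv
  set T := V * D
  have hfactor : 1 - C - D = (1 - C) * (1 - T) := by
    rw [mul_sub, mul_one, ← mul_assoc, hV, one_mul]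
  have hV' : V = 1 + C * V := by
    rw [← hV]; noncomm_ring
  have hDVD : D * V * D = D * D + D * C * T := by
    rw [hV']; simp only [T]; noncomm_ring
  have hsq : T * T = V * (D * D + D * C * T) := by
    rw [← hDVD]; simp only [T, mul_assoc]
  have hT : IsCompactOperator ⇑(T * T) := by
    rw [hsq]
    exact (hD2.add (hDC.comp_clm T)).clm_comp V
  rw [hfactor]
  exact FredholmIndexZero.isUnit_mul hC
    (fredholmIndexZero_one_sub_of_isCompactOperator_mul_self hT)
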